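/- Let {A_k}_{k≥1} be a sequence of d×d real matrices with all entries strictly positive, fix m ≥ 1, and suppose τ(A_m A_{m+1} ⋯ A_n) → 0 as n → ∞. Then the intersection ⋂_{n ≥ m} A_m A_{m+1} ⋯ A_n (ℝ₊^d) is a single ray: there exists a vector η ∈ ℝ^d with all coordinates strictly positive such that ⋂_{n ≥ m} A_m ⋯ A_n (ℝ₊^d) = { tη : t ≥ 0 }. -/

import Mathlib

open Filter

/-- The Hilbert projective metric on strictly positive vectors in `ℝ^d`. -/
noncomputable def hilbertDist {d : ℕ} (x y : Fin d → ℝ) : ℝ :=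
  Real.log (⨆ i : Fin d, ⨆ j : Fin d, (x i * y j) / (x j * y i))

/-- The Birkhoff contraction coefficient. -/
noncomputable def birkhoffCoeff {d : ℕ} (A : Matrix (Fin d) (Fin d) ℝ) : ℝ :=
  sSup {t : ℝ | ∃ x y : Fin d → ℝ, (∀ i, 0 < x i) ∧ (∀ i, 0 < y i) ∧
    0 < hilbertDist x y ∧ t = hilbertDist (A.mulVec x) (A.mulVec y) / hilbertDist x y}

/-- The forward product `P_m^n = A_m A_{m+1} ⋯ A_n`. -/
def fwdProd {d : ℕ} (A : ℕ → Matrix (Fin d) (Fin d) ℝ) (m n : ℕ) :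
    Matrix (Fin d) (Fin d) ℝ :=
  ((List.range' m (n + 1 - m)).map A).prod

/-- The nonnegative orthant `ℝ₊^d`. -/
def posCone (d : ℕ) : Set (Fin d → ℝ) := {x | ∀ i, 0 ≤ x i}

/-!
The products `P n = A_m ⋯ A_n` have positive entries, so the slices `P n (ℝ₊^d) ∩ Δ` of the
cones by the standard simplex `Δ` form a decreasing sequence of nonempty compact sets and
share a point `η`, which is strictly positive. Conversely, evaluating `τ(P)` on suitable pairs of
vectors shows that a small `τ(P)` forces every cross ratio `P i j * P l k / (P l j * P i k)`
to be close to `1`; then any two vectors of `P (ℝ₊^d)` have almost proportional coordinates.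
As `τ(P n) → 0`, every `v` of the intersection is therefore a multiple of `η`.
-/

open Matrix Topology

lemma eq_div_smul_of_forall_mul_le_mul {ι : Type*} {v w : ι → ℝ}
    (h : ∀ i l, v i * w l ≤ v l * w i) {i₀ : ι} (hw : w i₀ ≠ 0) :
    v = (v i₀ / w i₀) • w := by
  ext i
  rw [Pi.smul_apply, smul_eq_mul, div_mul_eq_mul_div, eq_div_iff hw]
  exact le_antisymm (h i i₀) (h i₀ i)

section PositiveMatrix

variable {ι : Type*} [Fintype ι]

lemma sum_mul_sum_le_mul_sum_mul_sum {f g F G : ι → ℝ} {C : ℝ}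
    (h : ∀ j k, f j * g k ≤ C * (F j * G k)) :
    (∑ j, f j) * (∑ k, g k) ≤ C * ((∑ j, F j) * (∑ k, G k)) := by
  rw [Finset.sum_mul_sum, Finset.sum_mul_sum, Finset.mul_sum]
  refine Finset.sum_le_sum fun j _ => ?_
  rw [Finset.mul_sum]
  exact Finset.sum_le_sum fun k _ => h j k

lemma mulVec_nonneg_of_nonneg {P : Matrix ι ι ℝ} (hP : ∀ i j, 0 ≤ P i j) {u : ι → ℝ}
    (hu : 0 ≤ u) : 0 ≤ P *ᵥ u := fun i =>
  Finset.sum_nonneg fun j _ => mul_nonneg (hP i j) (hu j)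

lemma mulVec_apply_pos [Nonempty ι] {P : Matrix ι ι ℝ} (hP : ∀ i j, 0 < P i j)
    {u : ι → ℝ} (hu : ∀ j, 0 < u j) (i : ι) : 0 < (P *ᵥ u) i :=
  Finset.sum_pos (fun j _ => mul_pos (hP i j) (hu j)) Finset.univ_nonempty

lemma mulVec_apply_pos_of_nonneg {P : Matrix ι ι ℝ} (hP : ∀ i j, 0 < P i j) {u : ι → ℝ}
    (hu : 0 ≤ u) (hu0 : u ≠ 0) (i : ι) : 0 < (P *ᵥ u) i := by
  obtain ⟨j, hj⟩ := Function.ne_iff.1 hu0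
  exact Finset.sum_pos' (fun k _ => mul_nonneg (hP i k).le (hu k))
    ⟨j, Finset.mem_univ _, mul_pos (hP i j) ((hu j).lt_of_ne' hj)⟩

lemma mulVec_mul_mulVec_le_of_mul_le_mul {P : Matrix ι ι ℝ} {E : ℝ}
    (hP : ∀ i l j k, P i j * P l k ≤ E * (P l j * P i k)) {u u' : ι → ℝ} (hu : 0 ≤ u)
    (hu' : 0 ≤ u') (i l : ι) :
    (P *ᵥ u) i * (P *ᵥ u') l ≤ E * ((P *ᵥ u) l * (P *ᵥ u') i) := by
  refine sum_mul_sum_le_mul_sum_mul_sum fun j k => ?_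
  calc P i j * u j * (P l k * u' k) = (P i j * P l k) * (u j * u' k) := by ring
    _ ≤ (E * (P l j * P i k)) * (u j * u' k) :=
        mul_le_mul_of_nonneg_right (hP i l j k) (mul_nonneg (hu j) (hu' k))
    _ = E * (P l j * u j * (P i k * u' k)) := by ring

lemma mul_apply_pos [Nonempty ι] {B C : Matrix ι ι ℝ} (hB : ∀ i j, 0 < B i j)
    (hC : ∀ i j, 0 < C i j) (i j : ι) : 0 < (B * C) i j :=
  Finset.sum_pos (fun k _ => mul_pos (hB i k) (hC k j)) Finset.univ_nonempty

end PositiveMatrix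

section HilbertMetric

variable {d : ℕ}

noncomputable def hilbertRatio (x y : Fin d → ℝ) : ℝ :=
  ⨆ i : Fin d, ⨆ j : Fin d, x i * y j / (x j * y i)

lemma div_le_hilbertRatio (x y : Fin d → ℝ) (i j : Fin d) :
    x i * y j / (x j * y i) ≤ hilbertRatio x y :=
  (le_ciSup (Set.finite_range _).bddAbove j).trans
    (le_ciSup (f := fun i => ⨆ j, x i * y j / (x j * y i)) (Set.finite_range _).bddAbove i)

variable {x y : Fin d → ℝ}

lemma log_div_le_hilbertDist (hx : ∀ i, 0 < x i) (hy : ∀ i, 0 < y i) (i j : Fin d) :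
    Real.log (x i * y j / (x j * y i)) ≤ hilbertDist x y :=
  Real.log_le_log (div_pos (mul_pos (hx i) (hy j)) (mul_pos (hx j) (hy i)))
    (div_le_hilbertRatio x y i j)

variable [NeZero d]

lemma hilbertRatio_le {c : ℝ} (h : ∀ i j, x i * y j / (x j * y i) ≤ c) :
    hilbertRatio x y ≤ c :=
  ciSup_le fun i => ciSup_le fun j => h i j

lemma one_le_hilbertRatio (hx : ∀ i, 0 < x i) (hy : ∀ i, 0 < y i) : 1 ≤ hilbertRatio x y := by
  simpa [div_self (mul_pos (hx 0) (hy 0)).ne'] using div_le_hilbertRatio x y 0 0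

lemma hilbertDist_nonneg (hx : ∀ i, 0 < x i) (hy : ∀ i, 0 < y i) : 0 ≤ hilbertDist x y :=
  Real.log_nonneg (one_le_hilbertRatio hx hy)

lemma hilbertDist_le_log_mul (hx : ∀ i, 0 < x i) (hy : ∀ i, 0 < y i) {a b : ℝ}
    (hxy : ∀ i, x i ≤ a * y i) (hyx : ∀ i, y i ≤ b * x i) :
    hilbertDist x y ≤ Real.log (a * b) := by
  refine Real.log_le_log (one_pos.trans_le (one_le_hilbertRatio hx hy)) <|
    hilbertRatio_le fun i j => (div_le_iff₀ (mul_pos (hx j) (hy i))).2 ?_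
  calc x i * y j ≤ (a * y i) * (b * x j) :=
        mul_le_mul (hxy i) (hyx j) (hy j).le ((hx i).le.trans (hxy i))
    _ = a * b * (x j * y i) := by ring

lemma hilbertDist_mulVec_le {P : Matrix (Fin d) (Fin d) ℝ} (hP : ∀ i j, 0 < P i j)
    (hx : ∀ i, 0 < x i) (hy : ∀ i, 0 < y i) :
    hilbertDist (P *ᵥ x) (P *ᵥ y) ≤ hilbertDist x y := by
  have hPx := mulVec_apply_pos hP hx
  have hPy := mulVec_apply_pos hP hy
  refine Real.log_le_log (one_pos.trans_le (one_le_hilbertRatio hPx hPy)) <|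
    hilbertRatio_le fun i l => (div_le_iff₀ (mul_pos (hPx l) (hPy i))).2 ?_
  rw [mul_comm ((P *ᵥ x) l)]
  refine sum_mul_sum_le_mul_sum_mul_sum (ι := Fin d) fun j k => ?_
  have hjk := (div_le_iff₀ (mul_pos (hx k) (hy j))).1 (div_le_hilbertRatio x y j k)
  calc P i j * x j * (P l k * y k) = (P i j * P l k) * (x j * y k) := by ring
    _ ≤ (P i j * P l k) * (hilbertRatio x y * (x k * y j)) :=
        mul_le_mul_of_nonneg_left hjk (mul_pos (hP i j) (hP l k)).le
    _ = hilbertRatio x y * (P i j * y j * (P l k * x k)) := by ring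

end HilbertMetric

section BirkhoffCoeff

variable {d : ℕ} [NeZero d] {P : Matrix (Fin d) (Fin d) ℝ}

lemma birkhoffCoeff_nonneg (hP : ∀ i j, 0 < P i j) : 0 ≤ birkhoffCoeff P :=
  Real.sSup_nonneg fun _ ⟨_, _, hx, hy, _, ht⟩ => ht ▸ div_nonneg
    (hilbertDist_nonneg (mulVec_apply_pos hP hx) (mulVec_apply_pos hP hy))
    (hilbertDist_nonneg hx hy)

lemma hilbertDist_mulVec_le_birkhoffCoeff_mul (hP : ∀ i j, 0 < P i j) {x y : Fin d → ℝ}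
    (hx : ∀ i, 0 < x i) (hy : ∀ i, 0 < y i) :
    hilbertDist (P *ᵥ x) (P *ᵥ y) ≤ birkhoffCoeff P * hilbertDist x y := by
  rcases (hilbertDist_nonneg hx hy).eq_or_lt with h0 | hpos
  · rw [← h0, mul_zero]
    exact (hilbertDist_mulVec_le hP hx hy).trans h0.ge
  · rw [← div_le_iff₀ hpos]
    refine le_csSup ⟨1, ?_⟩ ⟨x, y, hx, hy, hpos, rfl⟩
    rintro _ ⟨x, y, hx, hy, hpos, rfl⟩
    exact (div_le_one hpos).2 (hilbertDist_mulVec_le hP hx hy)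

/-- The strictly positive vectors `x + δ`, `y + δ` satisfy the same comparisons;
let `δ → 0`. -/
lemma log_div_mulVec_le_birkhoffCoeff_mul (hP : ∀ i j, 0 < P i j) {x y : Fin d → ℝ}
    (hx : 0 ≤ x) (hx0 : x ≠ 0) {a b : ℝ} (ha : 1 ≤ a) (hb : 1 ≤ b)
    (hxy : ∀ i, x i ≤ a * y i) (hyx : ∀ i, y i ≤ b * x i) (i l : Fin d) :
    Real.log ((P *ᵥ x) i * (P *ᵥ y) l / ((P *ᵥ x) l * (P *ᵥ y) i)) ≤
      birkhoffCoeff P * Real.log (a * b) := by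
  have hy : 0 ≤ y := fun t => nonneg_of_mul_nonneg_right ((hx t).trans (hxy t)) (by linarith)
  have hy0 : y ≠ 0 := fun h => hx0 (le_antisymm (fun t => by simpa [h] using hxy t) hx)
  have hPx : ∀ t, (P *ᵥ x) t ≠ 0 := fun t => (mulVec_apply_pos_of_nonneg hP hx hx0 t).ne'
  have hPy : ∀ t, (P *ᵥ y) t ≠ 0 := fun t => (mulVec_apply_pos_of_nonneg hP hy hy0 t).ne'
  set u := P *ᵥ 1
  have hcont : ContinuousAt (fun δ : ℝ => Real.log (((P *ᵥ x) i + δ * u i) *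
      ((P *ᵥ y) l + δ * u l) / (((P *ᵥ x) l + δ * u l) * ((P *ᵥ y) i + δ * u i)))) 0 := by
    fun_prop (disch := simp [hPx, hPy])
  refine le_of_tendsto (x := 𝓝[>] (0 : ℝ))
    (by simpa using hcont.tendsto.mono_left nhdsWithin_le_nhds)
    (eventually_nhdsWithin_of_forall fun δ (hδ : 0 < δ) => ?_)
  have hxδ : ∀ t, 0 < (x + δ • 1) t := fun t => add_pos_of_nonneg_of_pos (hx t) (by simpa)
  have hyδ : ∀ t, 0 < (y + δ • 1) t := fun t => add_pos_of_nonneg_of_pos (hy t) (by simpa)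
  calc _ = Real.log ((P *ᵥ (x + δ • 1)) i * (P *ᵥ (y + δ • 1)) l /
        ((P *ᵥ (x + δ • 1)) l * (P *ᵥ (y + δ • 1)) i)) := by
        simp [u, mulVec_add, mulVec_smul]
    _ ≤ hilbertDist (P *ᵥ (x + δ • 1)) (P *ᵥ (y + δ • 1)) :=
        log_div_le_hilbertDist (mulVec_apply_pos hP hxδ) (mulVec_apply_pos hP hyδ) i l
    _ ≤ birkhoffCoeff P * hilbertDist (x + δ • 1) (y + δ • 1) :=
        hilbertDist_mulVec_le_birkhoffCoeff_mul hP hxδ hyδ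
    _ ≤ birkhoffCoeff P * Real.log (a * b) := by
        refine mul_le_mul_of_nonneg_left (hilbertDist_le_log_mul hxδ hyδ (fun t => ?_)
          (fun t => ?_)) (birkhoffCoeff_nonneg hP)
        · simp only [Pi.add_apply, Pi.smul_apply, Pi.one_apply, smul_eq_mul, mul_one]
          nlinarith [hxy t, hy t]
        · simp only [Pi.add_apply, Pi.smul_apply, Pi.one_apply, smul_eq_mul, mul_one]
          nlinarith [hyx t, hx t]

end BirkhoffCoeff

section CrossRatio

variable {d : ℕ}

noncomputable def crossRatio (P : Matrix (Fin d) (Fin d) ℝ) (i l j k : Fin d) : ℝ :=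
  P i j * P l k / (P l j * P i k)

variable [NeZero d] {P : Matrix (Fin d) (Fin d) ℝ}

/-- The test vectors `x = 2c e_j + e_k`, `y = c e_j + 2 e_k` with `c = P l k / P l j` give
`(P x) l = (P y) l` and `(P x) i / (P y) i = (2ρ + 1) / (ρ + 2)`,
where `ρ = crossRatio P i l j k`. -/
lemma log_crossRatio_le_birkhoffCoeff_mul (hP : ∀ i j, 0 < P i j) (i l j k : Fin d) :
    Real.log ((2 * crossRatio P i l j k + 1) / (crossRatio P i l j k + 2)) ≤
      birkhoffCoeff P * Real.log 4 := by
  set c := P l k / P l j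
  have hc : 0 < c := div_pos (hP l k) (hP l j)
  have key := log_div_mulVec_le_birkhoffCoeff_mul hP (x := Pi.single j (2 * c) + Pi.single k 1)
    (y := Pi.single j c + Pi.single k 2) (a := 2) (b := 2) ?_ ?_ one_le_two one_le_two ?_ ?_ i l
  · have hmv : ∀ s t r, (P *ᵥ (Pi.single j s + Pi.single k t)) r = P r j * s + P r k * t := by
      intro s t r; simp [mulVec_add, mul_comm]
    have hPlj := hP l j
    have hPik := hP i k
    have hPlk := hP l k
    have hPij := hP i j
    have hratio : (P i j * (2 * c) + P i k * 1) * (P l j * c + P l k * 2) /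
        ((P l j * (2 * c) + P l k * 1) * (P i j * c + P i k * 2)) =
        (2 * crossRatio P i l j k + 1) / (crossRatio P i l j k + 2) := by
      simp only [crossRatio, c]
      field_simp
      ring
    rwa [hmv, hmv, hmv, hmv, hratio, show (2 : ℝ) * 2 = 4 by norm_num] at key
  · intro r; simp only [Pi.add_apply, Pi.single_apply, Pi.zero_apply]; split_ifs <;> linarith
  · intro h
    have := congrFun h k
    simp only [Pi.add_apply, Pi.single_apply, Pi.zero_apply] at this
    split_ifs at this <;> linarith
  · intro r; simp only [Pi.add_apply, Pi.single_apply]; split_ifs <;> linarith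
  · intro r; simp only [Pi.add_apply, Pi.single_apply]; split_ifs <;> linarith

lemma mul_le_mul_of_birkhoffCoeff_mul_lt (hP : ∀ i j, 0 < P i j) {E : ℝ} (hE : 0 ≤ E)
    (hτ : birkhoffCoeff P * Real.log 4 < Real.log ((2 * E + 1) / (E + 2))) (i l j k : Fin d) :
    P i j * P l k ≤ E * (P l j * P i k) := by
  rw [← div_le_iff₀ (mul_pos (hP l j) (hP i k))]
  by_contra! hρ
  change E < crossRatio P i l j k at hρ
  refine (log_crossRatio_le_birkhoffCoeff_mul hP i l j k).not_gt
    (hτ.trans (Real.log_lt_log (by positivity) ?_))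
  rw [div_lt_div_iff₀ (by linarith) (by linarith)]
  nlinarith

lemma eventually_mul_le_mul_of_tendsto_birkhoffCoeff {α : Type*} {f : Filter α}
    {P : α → Matrix (Fin d) (Fin d) ℝ} (hP : ∀ᶠ n in f, ∀ i j, 0 < P n i j)
    (hτ : Tendsto (fun n => birkhoffCoeff (P n)) f (𝓝 0)) {E : ℝ} (hE : 1 < E) :
    ∀ᶠ n in f, ∀ i l j k, P n i j * P n l k ≤ E * (P n l j * P n i k) := by
  have hlog4 : 0 < Real.log 4 := Real.log_pos (by norm_num)
  have hθ : 0 < Real.log ((2 * E + 1) / (E + 2)) / Real.log 4 :=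
    div_pos (Real.log_pos ((one_lt_div (by linarith)).2 (by linarith))) hlog4
  filter_upwards [hP, hτ.eventually (gt_mem_nhds hθ)] with n hPn hn
  exact mul_le_mul_of_birkhoffCoeff_mul_lt hPn (by linarith) ((lt_div_iff₀ hlog4).1 hn)

end CrossRatio

section ForwardProduct

variable {d : ℕ} {A : ℕ → Matrix (Fin d) (Fin d) ℝ} {m n : ℕ}

lemma fwdProd_succ (hmn : m ≤ n + 1) : fwdProd A m (n + 1) = fwdProd A m n * A (n + 1) := by
  rw [fwdProd, fwdProd, show n + 1 + 1 - m = n + 1 - m + 1 by omega, List.range'_concat,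
    show m + 1 * (n + 1 - m) = n + 1 by omega, List.map_append, List.prod_append]
  simp

lemma fwdProd_pos [NeZero d] (hA : ∀ k i j, 0 < A k i j) (hmn : m ≤ n) (i j : Fin d) :
    0 < fwdProd A m n i j := by
  induction n, hmn using Nat.le_induction generalizing i j with
  | base => simpa [fwdProd] using hA m i j
  | succ n hmn ih =>
    rw [fwdProd_succ (Nat.le_succ_of_le hmn)]
    exact mul_apply_pos ih (hA (n + 1)) i j

end ForwardProduct

section ImageCone

variable {d : ℕ} {M : Matrix (Fin d) (Fin d) ℝ}

lemma image_posCone_subset_posCone (hM : ∀ i j, 0 ≤ M i j) :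
    (fun x => M *ᵥ x) '' posCone d ⊆ posCone d := by
  rintro _ ⟨u, hu, rfl⟩
  exact mulVec_nonneg_of_nonneg hM hu

lemma smul_mem_image_posCone {v : Fin d → ℝ} (hv : v ∈ (fun x => M *ᵥ x) '' posCone d)
    {t : ℝ} (ht : 0 ≤ t) : t • v ∈ (fun x => M *ᵥ x) '' posCone d := by
  obtain ⟨u, hu, rfl⟩ := hv
  exact ⟨t • u, fun i => mul_nonneg ht (hu i), mulVec_smul M t u⟩

lemma image_mul_posCone_subset {N : Matrix (Fin d) (Fin d) ℝ} (hN : ∀ i j, 0 ≤ N i j) :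
    (fun x => (M * N) *ᵥ x) '' posCone d ⊆ (fun x => M *ᵥ x) '' posCone d := by
  rintro _ ⟨u, hu, rfl⟩
  exact ⟨N *ᵥ u, mulVec_nonneg_of_nonneg hN hu, mulVec_mulVec u M N⟩

lemma pos_of_mem_image_posCone (hM : ∀ i j, 0 < M i j) {v : Fin d → ℝ}
    (hv : v ∈ (fun x => M *ᵥ x) '' posCone d) (hv0 : v ≠ 0) (i : Fin d) : 0 < v i := by
  obtain ⟨u, hu, rfl⟩ := hv
  exact mulVec_apply_pos_of_nonneg hM hu (by rintro rfl; exact hv0 (mulVec_zero M)) i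

variable [NeZero d]

lemma sum_mulVec_pos_of_mem_stdSimplex (hM : ∀ i j, 0 < M i j) {x : Fin d → ℝ}
    (hx : x ∈ stdSimplex ℝ (Fin d)) : 0 < ∑ i, (M *ᵥ x) i := by
  have hx0 : x ≠ 0 := by rintro rfl; simp [stdSimplex] at hx
  exact Finset.sum_pos (fun i _ => mulVec_apply_pos_of_nonneg hM hx.1 hx0 i) Finset.univ_nonempty

lemma image_posCone_inter_stdSimplex (hM : ∀ i j, 0 < M i j) :
    (fun x => M *ᵥ x) '' posCone d ∩ stdSimplex ℝ (Fin d) =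
      (fun x => (∑ i, (M *ᵥ x) i)⁻¹ • M *ᵥ x) '' stdSimplex ℝ (Fin d) := by
  ext v
  constructor
  · rintro ⟨⟨u, hu, rfl⟩, -, hsum⟩
    have hs : ∑ j, u j ≠ 0 := by
      intro h
      rw [Finset.sum_eq_zero_iff_of_nonneg fun j _ => hu j] at h
      simp [show u = 0 from funext fun j => h j (Finset.mem_univ j)] at hsum
    refine ⟨(∑ j, u j)⁻¹ • u, ⟨fun j => ?_, ?_⟩, ?_⟩
    · exact mul_nonneg (inv_nonneg.2 (Finset.sum_nonneg fun j _ => hu j)) (hu j)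
    · simp [← Finset.mul_sum, hs]
    · simp [mulVec_smul, ← Finset.mul_sum, hsum, hs]
  · rintro ⟨x, hx, rfl⟩
    have hs := sum_mulVec_pos_of_mem_stdSimplex hM hx
    refine ⟨⟨(∑ i, (M *ᵥ x) i)⁻¹ • x,
      fun j => mul_nonneg (inv_nonneg.2 hs.le) (hx.1 j), mulVec_smul M _ x⟩, fun i => ?_, ?_⟩
    · exact mul_nonneg (inv_nonneg.2 hs.le)
        (mulVec_nonneg_of_nonneg (fun i j => (hM i j).le) hx.1 i)
    · simp [← Finset.mul_sum, hs.ne']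

lemma isCompact_image_posCone_inter_stdSimplex (hM : ∀ i j, 0 < M i j) :
    IsCompact ((fun x => M *ᵥ x) '' posCone d ∩ stdSimplex ℝ (Fin d)) := by
  have hMc : Continuous fun x : Fin d → ℝ => M *ᵥ x :=
    continuous_const.matrix_mulVec continuous_id
  have hsum : Continuous fun x : Fin d → ℝ => ∑ i, (M *ᵥ x) i :=
    continuous_finsetSum _ fun i _ => (continuous_apply i).comp hMc
  rw [image_posCone_inter_stdSimplex hM]
  refine (isCompact_stdSimplex ℝ (Fin d)).image_of_continuousOn
    ((hsum.continuousOn.inv₀ fun x hx => (sum_mulVec_pos_of_mem_stdSimplex hM hx).ne').smul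
      hMc.continuousOn)

lemma exists_mem_stdSimplex_forall_mem_image_posCone {M : ℕ → Matrix (Fin d) (Fin d) ℝ}
    (hM : ∀ n i j, 0 < M n i j)
    (hanti : ∀ n,
      (fun x => M (n + 1) *ᵥ x) '' posCone d ⊆ (fun x => M n *ᵥ x) '' posCone d) :
    ∃ η ∈ stdSimplex ℝ (Fin d), ∀ n, η ∈ (fun x => M n *ᵥ x) '' posCone d := by
  obtain ⟨η, hη⟩ := IsCompact.nonempty_iInter_of_sequence_nonempty_isCompact_isClosed
    (fun n => (fun x => M n *ᵥ x) '' posCone d ∩ stdSimplex ℝ (Fin d))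
    (fun n => Set.inter_subset_inter_left _ (hanti n))
    (fun n => by
      rw [image_posCone_inter_stdSimplex (hM n)]
      exact ⟨_, Set.mem_image_of_mem _ (single_mem_stdSimplex ℝ 0)⟩)
    (isCompact_image_posCone_inter_stdSimplex (hM 0))
    (fun n => (isCompact_image_posCone_inter_stdSimplex (hM n)).isClosed)
  rw [Set.mem_iInter] at hη
  exact ⟨η, (hη 0).2, fun n => (hη n).1⟩

end ImageCone

section LimitCone

variable {d : ℕ} [NeZero d]

lemma exists_mem_stdSimplex_forall_mem_image_fwdProd {A : ℕ → Matrix (Fin d) (Fin d) ℝ}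
    (hA : ∀ k i j, 0 < A k i j) (m : ℕ) :
    ∃ η ∈ stdSimplex ℝ (Fin d), ∀ n ≥ m,
      η ∈ (fun x => fwdProd A m n *ᵥ x) '' posCone d := by
  obtain ⟨η, hη, hηmem⟩ := exists_mem_stdSimplex_forall_mem_image_posCone
    (M := fun p => fwdProd A m (m + p)) (fun p => fwdProd_pos hA (Nat.le_add_right m p))
    (fun p => fwdProd_succ (A := A) (Nat.le_succ_of_le (Nat.le_add_right m p)) ▸
      image_mul_posCone_subset fun i j => (hA _ i j).le)
  exact ⟨η, hη, fun n hn => by simpa [Nat.add_sub_cancel' hn] using hηmem (n - m)⟩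

lemma mul_le_mul_of_eventually_mem_image_posCone {α : Type*} {f : Filter α} [f.NeBot]
    {P : α → Matrix (Fin d) (Fin d) ℝ} (hP : ∀ᶠ n in f, ∀ i j, 0 < P n i j)
    (hτ : Tendsto (fun n => birkhoffCoeff (P n)) f (𝓝 0)) {v w : Fin d → ℝ}
    (hv : ∀ᶠ n in f, v ∈ (fun x => P n *ᵥ x) '' posCone d)
    (hw : ∀ᶠ n in f, w ∈ (fun x => P n *ᵥ x) '' posCone d) (i l : Fin d) :
    v i * w l ≤ v l * w i := by
  obtain ⟨n, hPn, hvn, hwn⟩ := (hP.and (hv.and hw)).exists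
  have hv0 := image_posCone_subset_posCone (fun i j => (hPn i j).le) hvn
  have hw0 := image_posCone_subset_posCone (fun i j => (hPn i j).le) hwn
  refine (le_iff_forall_one_lt_le_mul₀ (mul_nonneg (hv0 l) (hw0 i))).2 fun E hE => ?_
  obtain ⟨n, hPn, ⟨u, hu, rfl⟩, ⟨u', hu', rfl⟩⟩ :=
    ((eventually_mul_le_mul_of_tendsto_birkhoffCoeff hP hτ hE).and (hv.and hw)).exists
  rw [mul_comm _ E]
  exact mulVec_mul_mulVec_le_of_mul_le_mul hPn hu hu' i l

end LimitCone

/-- If `τ(A_m ⋯ A_n) → 0`, then the limiting cone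
`⋂_{n ≥ m} A_m ⋯ A_n (ℝ₊^d)` is a single ray spanned by a strictly positive vector. -/
theorem stmt10 {d : ℕ} (A : ℕ → Matrix (Fin d) (Fin d) ℝ)
    (hA : ∀ k i j, 0 < A k i j) (m : ℕ)
    (h : Tendsto (fun n => birkhoffCoeff (fwdProd A m n)) atTop (nhds 0)) :
    ∃ η : Fin d → ℝ, (∀ i, 0 < η i) ∧
      (⋂ n ∈ Set.Ici m, (fun x => (fwdProd A m n).mulVec x) '' posCone d) =
        {v | ∃ t : ℝ, 0 ≤ t ∧ v = t • η} := by
  rcases eq_or_ne d 0 with rfl | hd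
  · refine ⟨0, finZeroElim, Set.ext fun v => ?_⟩
    exact iff_of_true (Set.mem_iInter₂.2 fun _ _ => ⟨0, finZeroElim, Subsingleton.elim _ _⟩)
      ⟨0, le_rfl, Subsingleton.elim _ _⟩
  have : NeZero d := ⟨hd⟩
  have hPm : ∀ i j, 0 < fwdProd A m m i j := fwdProd_pos hA le_rfl
  obtain ⟨η, hη, hηmem⟩ := exists_mem_stdSimplex_forall_mem_image_fwdProd hA m
  have hηpos := pos_of_mem_image_posCone hPm (hηmem m le_rfl)
    (by rintro rfl; simp [stdSimplex] at hη)
  refine ⟨η, hηpos, Set.Subset.antisymm (fun v hv => ?_) ?_⟩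
  · simp only [Set.mem_iInter, Set.mem_Ici] at hv
    have hv0 := image_posCone_subset_posCone (fun i j => (hPm i j).le) (hv m le_rfl)
    refine ⟨v 0 / η 0, div_nonneg (hv0 0) (hηpos 0).le,
      eq_div_smul_of_forall_mul_le_mul ?_ (hηpos 0).ne'⟩
    exact mul_le_mul_of_eventually_mem_image_posCone
      (eventually_atTop.2 ⟨m, fun n hn => fwdProd_pos hA hn⟩) h
      (eventually_atTop.2 ⟨m, hv⟩) (eventually_atTop.2 ⟨m, hηmem⟩)
  · rintro _ ⟨t, ht, rfl⟩
    simp only [Set.mem_iInter, Set.mem_Ici]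
    exact fun n hn => smul_mem_image_posCone (hηmem n hn) ht
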